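/- arXiv:math/0510363 — 6 statements merged into one kernel-verified Lean document; each statement's English description precedes it below -/
import Mathlib

section
/- The map A on ℝ² defined by A(ε, δ) = (1 - ε/(1-δ), ε) has order 5: applying A five times to any point (ε, δ) with all intermediate points having δ ≠ 1 (so that the map is defined) returns the original point. -/
/-- Vertex reflection of 3-dimensional generalized regular polytopes in the relative basis. -/
noncomputable def refA : ℝ × ℝ → ℝ × ℝ := fun p => (1 - p.1 / (1 - p.2), p.1)

/-! Writing the orbit as `(x (n+1), x n)`, the coordinates obey `x (n+2) = 1 - x (n+1) / (1 - x n)`,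
so `v = x - 1` satisfies Lyness' period-five recurrence `v (n+2) = (1 + v (n+1)) / v n`.
Starting from `δ, ε`, the terms `x n` are
`δ, ε, 1 - ε/(1-δ), εδ/((1-ε)(1-δ)), 1 - δ/(1-ε), δ, ε`, and the orbit is defined exactly when
`δ ≠ 1`, `ε ≠ 1`, `ε ≠ 0`, `ε + δ ≠ 1`, `δ ≠ 0`. -/

@[simp] lemma refA_apply (a b : ℝ) : refA (a, b) = (1 - a / (1 - b), a) := rfl

section Orbit

variable {ε δ : ℝ}

lemma refA_iterate_two (hδ : δ ≠ 1) (hε : ε ≠ 1) :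
    refA^[2] (ε, δ) = (ε * δ / ((1 - ε) * (1 - δ)), 1 - ε / (1 - δ)) := by
  have hδ' : 1 - δ ≠ 0 := sub_ne_zero.mpr hδ.symm
  have hε' : 1 - ε ≠ 0 := sub_ne_zero.mpr hε.symm
  simp only [Function.iterate_succ_apply', Function.iterate_zero_apply, refA_apply, Prod.mk.injEq,
    and_true]
  field_simp
  ring

lemma refA_iterate_three (hδ : δ ≠ 1) (hε : ε ≠ 1) (hε₀ : ε ≠ 0) :
    refA^[3] (ε, δ) = (1 - δ / (1 - ε), ε * δ / ((1 - ε) * (1 - δ))) := by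
  have hδ' : 1 - δ ≠ 0 := sub_ne_zero.mpr hδ.symm
  have hε' : 1 - ε ≠ 0 := sub_ne_zero.mpr hε.symm
  rw [Function.iterate_succ_apply', refA_iterate_two hδ hε, refA_apply, Prod.mk.injEq,
    sub_sub_cancel]
  refine ⟨?_, rfl⟩
  field_simp

lemma refA_iterate_four (hδ : δ ≠ 1) (hε : ε ≠ 1) (hε₀ : ε ≠ 0) (hεδ : ε + δ ≠ 1) :
    refA^[4] (ε, δ) = (δ, 1 - δ / (1 - ε)) := by
  have hδ' : 1 - δ ≠ 0 := sub_ne_zero.mpr hδ.symm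
  have hε' : 1 - ε ≠ 0 := sub_ne_zero.mpr hε.symm
  have hεδ' : 1 - ε - δ ≠ 0 := by contrapose! hεδ; linarith
  have hx₃ : 1 - ε * δ / ((1 - ε) * (1 - δ)) = (1 - ε - δ) / ((1 - ε) * (1 - δ)) := by
    field_simp
    ring
  rw [Function.iterate_succ_apply', refA_iterate_three hδ hε hε₀, refA_apply, Prod.mk.injEq, hx₃]
  refine ⟨?_, rfl⟩
  field_simp
  ring

lemma refA_iterate_five (hδ : δ ≠ 1) (hε : ε ≠ 1) (hε₀ : ε ≠ 0) (hεδ : ε + δ ≠ 1)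
    (hδ₀ : δ ≠ 0) : refA^[5] (ε, δ) = (ε, δ) := by
  have hε' : 1 - ε ≠ 0 := sub_ne_zero.mpr hε.symm
  rw [Function.iterate_succ_apply', refA_iterate_four hδ hε hε₀ hεδ, refA_apply, Prod.mk.injEq,
    sub_sub_cancel]
  refine ⟨?_, rfl⟩
  field_simp
  ring

end Orbit

theorem refA_order_five (ε δ : ℝ)
    (h : ∀ k < 5, (refA^[k] (ε, δ)).2 ≠ 1) :
    refA^[5] (ε, δ) = (ε, δ) := by
  have hδ : δ ≠ 1 := h 0 (by norm_num)
  have hε : ε ≠ 1 := h 1 (by norm_num)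
  have hε₀ : ε ≠ 0 := by
    have h2 := h 2 (by norm_num)
    rw [refA_iterate_two hδ hε] at h2
    contrapose! h2
    simp [h2]
  have hεδ : ε + δ ≠ 1 := by
    have h3 := h 3 (by norm_num)
    rw [refA_iterate_three hδ hε hε₀] at h3
    contrapose! h3
    rw [div_eq_one_iff_eq (mul_ne_zero (sub_ne_zero.mpr hε.symm) (sub_ne_zero.mpr hδ.symm))]
    linear_combination h3
  have hδ₀ : δ ≠ 0 := by
    have h4 := h 4 (by norm_num)
    rw [refA_iterate_four hδ hε hε₀ hεδ] at h4
    contrapose! h4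
    simp [h4]
  exact refA_iterate_five hδ hε hε₀ hεδ hδ₀
end

section
/- The maps A(ε,δ) = (1 - ε/(1-δ), ε) and D(ε,δ) = (1 - δ/(1-ε), δ) satisfy the dihedral relations of D₅: A⁵ = id, D² = id, and (A∘D)² = id (wherever the compositions are defined). -/
noncomputable def refD : ℝ × ℝ → ℝ × ℝ := fun p => (1 - p.2 / (1 - p.1), p.2)

theorem refA_eq_of_mul_eq {x y z : ℝ} (hy : y ≠ 1) (h : (1 - z) * (1 - y) = x) :
    refA (x, y) = (z, x) := by
  have hy' : 1 - y ≠ 0 := sub_ne_zero.2 hy.symm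
  refine Prod.ext ?_ rfl
  change 1 - x / (1 - y) = z
  rw [← h, mul_div_cancel_right₀ _ hy']
  ring

theorem refA_iterate_five_s9 {ε δ : ℝ} (h : ∀ k < 5, (refA^[k] (ε, δ)).2 ≠ 1) :
    refA^[5] (ε, δ) = (ε, δ) := by
  have hδ : 1 - δ ≠ 0 := sub_ne_zero.2 (h 0 (by norm_num)).symm
  have hε : 1 - ε ≠ 0 := sub_ne_zero.2 (h 1 (by norm_num)).symm
  have e₁ : refA^[1] (ε, δ) = ((1 - δ - ε) / (1 - δ), ε) :=
    refA_eq_of_mul_eq (h 0 (by norm_num)) (by field_simp; ring)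
  have e₂ : refA^[2] (ε, δ) = (δ * ε / ((1 - δ) * (1 - ε)), (1 - δ - ε) / (1 - δ)) := by
    rw [Function.iterate_succ_apply', e₁]
    exact refA_eq_of_mul_eq (h 1 (by norm_num)) (by field_simp; ring)
  have e₃ : refA^[3] (ε, δ) = ((1 - δ - ε) / (1 - ε), δ * ε / ((1 - δ) * (1 - ε))) := by
    rw [Function.iterate_succ_apply', e₂]
    exact refA_eq_of_mul_eq (by simpa [e₂] using h 2 (by norm_num)) (by field_simp; ring)
  have e₄ : refA^[4] (ε, δ) = (δ, (1 - δ - ε) / (1 - ε)) := by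
    rw [Function.iterate_succ_apply', e₃]
    exact refA_eq_of_mul_eq (by simpa [e₃] using h 3 (by norm_num)) (by field_simp; ring)
  rw [Function.iterate_succ_apply', e₄]
  exact refA_eq_of_mul_eq (by simpa [e₄] using h 4 (by norm_num)) (by field_simp; ring)

theorem refD_refA {ε δ : ℝ} (hδ : δ ≠ 1) (h : (refA (ε, δ)).1 ≠ 1) :
    refD (refA (ε, δ)) = (δ, ε) :=
  refA_eq_of_mul_eq h (by
    have : 1 - δ ≠ 0 := sub_ne_zero.2 hδ.symm
    change (1 - δ) * (1 - (1 - ε / (1 - δ))) = ε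
    field_simp; ring)

-- `refD (ε, δ)` is definitionally `refA (δ, ε)`.
theorem refD_refD {ε δ : ℝ} (hε : ε ≠ 1) (h : (refD (ε, δ)).1 ≠ 1) :
    refD (refD (ε, δ)) = (ε, δ) :=
  refD_refA hε h

theorem refA_refD_dihedral_relations :
    (∀ ε δ : ℝ, (∀ k < 5, (refA^[k] (ε, δ)).2 ≠ 1) → refA^[5] (ε, δ) = (ε, δ)) ∧
    (∀ ε δ : ℝ, ε ≠ 1 → (refD (ε, δ)).1 ≠ 1 → refD (refD (ε, δ)) = (ε, δ)) ∧
    (∀ ε δ : ℝ, δ ≠ 1 → (refA (ε, δ)).1 ≠ 1 →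
      (refD (refA (ε, δ))).2 ≠ 1 → (refA (refD (refA (ε, δ)))).1 ≠ 1 →
      refD (refA (refD (refA (ε, δ)))) = (ε, δ)) := by
  refine ⟨fun ε δ => refA_iterate_five_s9, fun ε δ => refD_refD, ?_⟩
  intro ε δ hδ hA hDA hADA
  rw [refD_refA hδ hA] at hDA hADA ⊢
  exact refD_refA hDA hADA
end

section
/- The map A₄(ε, δ, η) = (1 - ε(1-η)/(1-δ-η), ε, δ) on ℝ³ has order 6: six-fold application returns any point to itself, assuming all intermediate denominators are nonzero. -/
/-!
Write `N = (1 - a)(1 - c) - b`, so that `refA4 (a, b, c) = (N / (1 - b - c), a, b)`, and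
`D = (1 - a - b)(1 - b - c)`. Three steps of the recursion collapse to the closed form
`(a, b, c) ↦ (x₃, x₂, x₁) = (N / (1 - a - b), a b c / D, N / (1 - b - c))`, and this map is an
involution: `1 - x₂ - x₁ = a N / D`, `1 - x₃ - x₂ = c N / D` and `(1 - x₃)(1 - x₁) - x₂ = a c N / D`,
so on a second application the common factor `N / D` cancels.
-/

/-- Vertex reflection of 4-dimensional generalized regular polytopes. -/
noncomputable def refA4 : ℝ × ℝ × ℝ → ℝ × ℝ × ℝ :=
  fun p => (1 - p.1 * (1 - p.2.2) / (1 - p.2.1 - p.2.2), p.1, p.2.1)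

open Function

noncomputable def refA4Denom (p : ℝ × ℝ × ℝ) : ℝ := 1 - p.2.1 - p.2.2

noncomputable def refA4Cube (p : ℝ × ℝ × ℝ) : ℝ × ℝ × ℝ :=
  (((1 - p.1) * (1 - p.2.2) - p.2.1) / (1 - p.1 - p.2.1),
    p.1 * p.2.1 * p.2.2 / ((1 - p.1 - p.2.1) * (1 - p.2.1 - p.2.2)),
    ((1 - p.1) * (1 - p.2.2) - p.2.1) / (1 - p.2.1 - p.2.2))

theorem refA4_apply {a b c : ℝ} (h : 1 - b - c ≠ 0) :
    refA4 (a, b, c) = (((1 - a) * (1 - c) - b) / (1 - b - c), a, b) := by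
  simp only [refA4, Prod.mk.injEq, and_true]
  field_simp
  ring

theorem refA4_iterate_three (p : ℝ × ℝ × ℝ) (h : ∀ k < 3, refA4Denom (refA4^[k] p) ≠ 0) :
    refA4^[3] p = refA4Cube p := by
  obtain ⟨a, b, c⟩ := p
  have hbc : 1 - b - c ≠ 0 := h 0 (by norm_num)
  have hab : 1 - a - b ≠ 0 := h 1 (by norm_num)
  set N := (1 - a) * (1 - c) - b with hN
  have hx₁ : refA4 (a, b, c) = (N / (1 - b - c), a, b) := refA4_apply hbc
  have hx₂ : refA4 (N / (1 - b - c), a, b) =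
      (a * b * c / ((1 - a - b) * (1 - b - c)), N / (1 - b - c), a) := by
    rw [refA4_apply hab, Prod.mk.injEq, hN]
    refine ⟨?_, rfl⟩
    field_simp
    ring
  have hd₂ : 1 - N / (1 - b - c) - a = a * b / (1 - b - c) := by
    rw [hN]
    field_simp
    ring
  have hd₂₀ : a * b / (1 - b - c) ≠ 0 := by
    simpa [refA4Denom, hx₁, hx₂, hd₂] using h 2 (by norm_num)
  obtain ⟨ha, hb⟩ : a ≠ 0 ∧ b ≠ 0 := by simpa [hbc] using hd₂₀
  rw [iterate_succ_apply', iterate_succ_apply', iterate_one, hx₁, hx₂, refA4_apply (hd₂ ▸ hd₂₀),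
    hd₂, refA4Cube, Prod.mk.injEq]
  refine ⟨?_, rfl⟩
  field_simp
  ring

theorem refA4Cube_refA4Cube (p : ℝ × ℝ × ℝ) (h : ∀ k < 2, refA4Denom (refA4^[k] p) ≠ 0)
    (h' : ∀ k < 2, refA4Denom (refA4^[k] (refA4Cube p)) ≠ 0) : refA4Cube (refA4Cube p) = p := by
  obtain ⟨a, b, c⟩ := p
  have hbc : 1 - b - c ≠ 0 := h 0 (by norm_num)
  have hab : 1 - a - b ≠ 0 := h 1 (by norm_num)
  set q := refA4Cube (a, b, c) with hq
  set N := (1 - a) * (1 - c) - b with hN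
  set D := (1 - a - b) * (1 - b - c) with hD
  have e₁ : 1 - q.2.1 - q.2.2 = a * N / D := by
    simp only [hq, hN, hD, refA4Cube]
    field_simp
    ring
  have e₂ : 1 - q.1 - q.2.1 = c * N / D := by
    simp only [hq, hN, hD, refA4Cube]
    field_simp
    ring
  have e₃ : (1 - q.1) * (1 - q.2.2) - q.2.1 = a * c * N / D := by
    simp only [hq, hN, hD, refA4Cube]
    field_simp
    ring
  have e₄ : q.1 * q.2.1 * q.2.2 = a * b * c * N ^ 2 / D ^ 2 := by
    simp only [hq, hN, hD, refA4Cube]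
    field_simp
  have h₀ : a * N / D ≠ 0 := e₁ ▸ h' 0 (by norm_num)
  have h₁ : c * N / D ≠ 0 := e₂ ▸ h' 1 (by norm_num)
  obtain ⟨ha, hN₀⟩ := mul_ne_zero_iff.mp (div_ne_zero_iff.mp h₀).1
  have hc : c ≠ 0 := left_ne_zero_of_mul (div_ne_zero_iff.mp h₁).1
  have hD₀ : D ≠ 0 := mul_ne_zero hab hbc
  rw [refA4Cube, e₁, e₂, e₃, e₄]
  refine Prod.ext ?_ (Prod.ext ?_ ?_) <;> dsimp only <;> field_simp

theorem refA4_order_six (ε δ η : ℝ)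
    (h : ∀ k < 6, 1 - (refA4^[k] (ε, δ, η)).2.1 - (refA4^[k] (ε, δ, η)).2.2 ≠ 0) :
    refA4^[6] (ε, δ, η) = (ε, δ, η) := by
  have h₃ : refA4^[3] (ε, δ, η) = refA4Cube (ε, δ, η) :=
    refA4_iterate_three _ fun k hk => h k (by omega)
  have hq : ∀ k < 3, refA4Denom (refA4^[k] (refA4Cube (ε, δ, η))) ≠ 0 := fun k hk => by
    rw [← h₃, ← iterate_add_apply]
    exact h (k + 3) (by omega)
  rw [show 6 = 3 + 3 from rfl, iterate_add_apply, h₃, refA4_iterate_three _ hq]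
  exact refA4Cube_refA4Cube _ (fun k hk => h k (by omega)) (fun k hk => hq k (by omega))
end

section
/- The map C₄(ε,δ,η) = (1 - ε - δ/(1-η), δ, ε/(ε+δ)) has order 3 wherever defined, and its fixed points are precisely the triples with ε = η/(1+2η) and δ = (1-η)/(1+2η). -/
/-!
In the coordinate `s = δ / (1 - η)` the map `C₄` becomes the affine map
`(ε, δ, s) ↦ (1 - ε - s, δ, ε + δ)`, whose cube is visibly the identity; the change of
coordinates is injective where `δ ≠ 0` and `η ≠ 1`, and `δ ≠ 0` is forced by the second
step of the orbit. For fixed `η` the fixed-point equations are linear in `(ε, δ)`, with determinant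
`-(1 - η)(1 + 2η)`; at `η = -1/2` they are inconsistent.
-/

noncomputable def refC4 : ℝ × ℝ × ℝ → ℝ × ℝ × ℝ :=
  fun p => (1 - p.1 - p.2.1 / (1 - p.2.2), p.2.1, p.1 / (p.1 + p.2.1))

def refC4Affine (p : ℝ × ℝ × ℝ) : ℝ × ℝ × ℝ := (1 - p.1 - p.2.2, p.2.1, p.1 + p.2.1)

theorem refC4Affine_iterate_three : refC4Affine^[3] = id := by
  funext p
  simp only [Function.iterate_succ, Function.iterate_zero, Function.comp_apply, id_eq, refC4Affine]
  ext <;> simp only <;> ring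

noncomputable def refC4Chart (p : ℝ × ℝ × ℝ) : ℝ × ℝ × ℝ :=
  (p.1, p.2.1, p.2.1 / (1 - p.2.2))

theorem refC4Chart_injOn : Set.InjOn refC4Chart {p | p.2.1 ≠ 0 ∧ p.2.2 ≠ 1} := by
  rintro ⟨ε, δ, η⟩ ⟨hδ, -⟩ ⟨ε', δ', η'⟩ - h
  simp only [refC4Chart, Prod.mk.injEq] at h hδ
  obtain ⟨rfl, rfl, hs⟩ := h
  have : 1 - η = 1 - η' := by
    rw [← div_div_cancel₀ hδ (b := 1 - η), hs, div_div_cancel₀ hδ]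
  simp only [sub_right_inj.1 this]

theorem refC4_snd_fst (p : ℝ × ℝ × ℝ) : (refC4 p).2.1 = p.2.1 := rfl

theorem refC4_iterate_snd_fst (p : ℝ × ℝ × ℝ) (n : ℕ) : (refC4^[n] p).2.1 = p.2.1 := by
  induction n with
  | zero => rfl
  | succ n ih => rw [Function.iterate_succ_apply', refC4_snd_fst, ih]

theorem refC4_snd_snd_eq_one_iff (p : ℝ × ℝ × ℝ) :
    (refC4 p).2.2 = 1 ↔ p.2.1 = 0 ∧ p.1 ≠ 0 := by
  obtain ⟨ε, δ, η⟩ := p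
  simp only [refC4]
  by_cases hεδ : ε + δ = 0
  · simp only [hεδ, div_zero, zero_ne_one, false_iff, not_and, not_not]
    intro hδ
    simpa [hδ] using hεδ
  · rw [div_eq_one_iff_eq hεδ]
    constructor
    · exact fun h => ⟨by linarith, fun hε => hεδ (by linarith)⟩
    · rintro ⟨hδ, -⟩
      simp [hδ]

theorem refC4Chart_refC4 {p : ℝ × ℝ × ℝ} (hδ : p.2.1 ≠ 0) (hεδ : p.1 + p.2.1 ≠ 0) :
    refC4Chart (refC4 p) = refC4Affine (refC4Chart p) := by
  obtain ⟨ε, δ, η⟩ := p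
  have : 1 - ε / (ε + δ) = δ / (ε + δ) := by field_simp; ring
  simp only [refC4Chart, refC4Affine, refC4, this, div_div_cancel₀ hδ]

theorem refC4Chart_refC4_iterate {p : ℝ × ℝ × ℝ} {n : ℕ} (hδ : p.2.1 ≠ 0)
    (hεδ : ∀ k < n, (refC4^[k] p).1 + (refC4^[k] p).2.1 ≠ 0) :
    refC4Chart (refC4^[n] p) = refC4Affine^[n] (refC4Chart p) := by
  induction n with
  | zero => rfl
  | succ n ih =>
    rw [Function.iterate_succ_apply', Function.iterate_succ_apply',
      refC4Chart_refC4 (by rwa [refC4_iterate_snd_fst]) (hεδ n n.lt_succ_self),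
      ih fun k hk => hεδ k (hk.trans n.lt_succ_self)]

theorem refC4_eq_self_iff {ε δ η : ℝ} (hη : η ≠ 1) (hεδ : ε + δ ≠ 0) :
    refC4 (ε, δ, η) = (ε, δ, η) ↔ (1 - 2 * ε) * (1 - η) = δ ∧ ε = η * (ε + δ) := by
  have hη' : 1 - η ≠ 0 := sub_ne_zero.2 hη.symm
  have h₁ : 1 - ε - δ / (1 - η) = ε ↔ (1 - 2 * ε) * (1 - η) = δ := by
    rw [eq_comm (b := δ), ← div_eq_iff hη']
    constructor <;> intro h <;> linarith
  simp only [refC4, Prod.mk.injEq, true_and]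
  rw [h₁, div_eq_iff hεδ]

theorem refC4_fixed_point_equations_iff {ε δ η : ℝ} (hη : η ≠ 1) (hεδ : ε + δ ≠ 0) :
    (1 - 2 * ε) * (1 - η) = δ ∧ ε = η * (ε + δ) ↔
      ε = η / (1 + 2 * η) ∧ δ = (1 - η) / (1 + 2 * η) := by
  constructor
  · rintro ⟨h₁, h₂⟩
    have hε : ε * (1 + 2 * η) = η := by
      have : ε * (1 - η) = η * (1 - 2 * ε) * (1 - η) := by linear_combination h₂ - η * h₁
      linear_combination mul_right_cancel₀ (sub_ne_zero.2 hη.symm) this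
    have hη₂ : 1 + 2 * η ≠ 0 := fun h => by
      rw [h, mul_zero] at hε
      linarith
    refine ⟨by rw [eq_div_iff hη₂, hε], ?_⟩
    rw [eq_div_iff hη₂, ← h₁]
    linear_combination -2 * (1 - η) * hε
  · rintro ⟨rfl, rfl⟩
    have hη₂ : 1 + 2 * η ≠ 0 := fun h => hεδ (by rw [h, div_zero, div_zero, add_zero])
    constructor <;> field_simp <;> ring

theorem refC4_iterate_three {p : ℝ × ℝ × ℝ}
    (h : ∀ k < 3, (refC4^[k] p).2.2 ≠ 1 ∧ (refC4^[k] p).1 + (refC4^[k] p).2.1 ≠ 0) :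
    refC4^[3] p = p := by
  have hδ : p.2.1 ≠ 0 := fun hδ => (h 1 (by norm_num)).1 <|
    (refC4_snd_snd_eq_one_iff p).2 ⟨hδ, by simpa [hδ] using (h 0 (by norm_num)).2⟩
  have hp₃ : (refC4^[3] p).2.2 ≠ 1 := by
    rw [Function.iterate_succ_apply', Ne, refC4_snd_snd_eq_one_iff, refC4_iterate_snd_fst]
    exact fun h' => hδ h'.1
  refine refC4Chart_injOn ⟨by rwa [refC4_iterate_snd_fst], hp₃⟩
    ⟨hδ, (h 0 (by norm_num)).1⟩ ?_
  rw [refC4Chart_refC4_iterate hδ fun k hk => (h k hk).2, refC4Affine_iterate_three, id]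

theorem refC4_order_three_and_fixed_points :
    (∀ ε δ η : ℝ,
      (∀ k < 3, (refC4^[k] (ε, δ, η)).2.2 ≠ 1 ∧
        (refC4^[k] (ε, δ, η)).1 + (refC4^[k] (ε, δ, η)).2.1 ≠ 0) →
      refC4^[3] (ε, δ, η) = (ε, δ, η)) ∧
    (∀ ε δ η : ℝ, η ≠ 1 → ε + δ ≠ 0 →
      (refC4 (ε, δ, η) = (ε, δ, η) ↔
        ε = η / (1 + 2 * η) ∧ δ = (1 - η) / (1 + 2 * η))) :=
  ⟨fun _ _ _ => refC4_iterate_three, fun _ _ _ hη hεδ =>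
    (refC4_eq_self_iff hη hεδ).trans (refC4_fixed_point_equations_iff hη hεδ)⟩
end

section
/- The map D₄(ε,δ,η) = (1 - ε - δ/(1-η), ε, δ/(ε+δ)) has order 4 wherever defined, and its unique fixed point is (1/4, 1/4, 1/2), corresponding to the regular polytope {3,3,4}. -/
noncomputable def refD4 : ℝ × ℝ × ℝ → ℝ × ℝ × ℝ :=
  fun p => (1 - p.1 - p.2.1 / (1 - p.2.2), p.1, p.2.1 / (p.1 + p.2.1))

/-!
Write a point as `(w₀, w₃, w₂ / (w₃ + w₂))` for four weights `w₀ + w₁ + w₂ + w₃ = 1`. In these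
coordinates `refD4` is the cyclic shift `wᵢ ↦ wᵢ₊₁` of the weights, hence has order 4.

The shift is only conjugate to `refD4` while `w₃ ≠ 0` and `w₃ + w₂ ≠ 0`; the nondegeneracy
hypotheses along the orbit propagate these two conditions from one weight vector to the next.
A point with `δ = 0` has no weight vector, but its orbit reaches `η = 1` within three steps.

A fixed point has `δ = ε`, so `η = ε / 2ε = 1/2`, and then `ε = 1 - 3ε`.
-/

def rotateWeights (w : Fin 4 → ℝ) : Fin 4 → ℝ := fun i => w (i + 1)

noncomputable def paramsOfWeights (w : Fin 4 → ℝ) : ℝ × ℝ × ℝ := (w 0, w 3, w 2 / (w 3 + w 2))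

noncomputable def weightsOfParams (p : ℝ × ℝ × ℝ) : Fin 4 → ℝ :=
  ![p.1, 1 - p.1 - p.2.1 / (1 - p.2.2), p.2.1 * p.2.2 / (1 - p.2.2), p.2.1]

def WeightsAdmissible (w : Fin 4 → ℝ) : Prop := w 3 ≠ 0 ∧ w 3 + w 2 ≠ 0

lemma sum_rotateWeights (w : Fin 4 → ℝ) : ∑ i, rotateWeights w i = ∑ i, w i :=
  Equiv.sum_comp (Equiv.addRight 1) w

lemma sum_iterate_rotateWeights (n : ℕ) (w : Fin 4 → ℝ) :
    ∑ i, (rotateWeights^[n] w) i = ∑ i, w i :=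
  congrFun (Function.iterate_invariant (g := fun v : Fin 4 → ℝ => ∑ i, v i)
    (funext sum_rotateWeights) n) w

lemma iterate_rotateWeights_four (w : Fin 4 → ℝ) : rotateWeights^[4] w = w := by
  ext i
  simp only [Function.iterate_succ, Function.iterate_zero, Function.comp_apply, id_eq,
    rotateWeights, add_assoc, Fin.reduceAdd, add_zero]

lemma sum_weightsOfParams {p : ℝ × ℝ × ℝ} (hη : p.2.2 ≠ 1) : ∑ i, weightsOfParams p i = 1 := by
  have hη' : 1 - p.2.2 ≠ 0 := sub_ne_zero.mpr hη.symm
  simp only [Fin.sum_univ_four, weightsOfParams, Matrix.cons_val]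
  field_simp
  ring

lemma paramsOfWeights_weightsOfParams {p : ℝ × ℝ × ℝ} (hη : p.2.2 ≠ 1) (hδ : p.2.1 ≠ 0) :
    paramsOfWeights (weightsOfParams p) = p := by
  have hη' : 1 - p.2.2 ≠ 0 := sub_ne_zero.mpr hη.symm
  simp only [paramsOfWeights, weightsOfParams, Matrix.cons_val]
  refine Prod.ext rfl (Prod.ext rfl ?_)
  field_simp
  ring

lemma weightsAdmissible_weightsOfParams {p : ℝ × ℝ × ℝ} (hη : p.2.2 ≠ 1) (hδ : p.2.1 ≠ 0) :
    WeightsAdmissible (weightsOfParams p) := by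
  have hη' : 1 - p.2.2 ≠ 0 := sub_ne_zero.mpr hη.symm
  have h23 : p.2.1 + p.2.1 * p.2.2 / (1 - p.2.2) = p.2.1 / (1 - p.2.2) := by
    field_simp
    ring
  simp only [WeightsAdmissible, weightsOfParams, Matrix.cons_val, h23]
  exact ⟨hδ, div_ne_zero hδ hη'⟩

lemma refD4_paramsOfWeights {w : Fin 4 → ℝ} (hsum : ∑ i, w i = 1) (hw : WeightsAdmissible w) :
    refD4 (paramsOfWeights w) = paramsOfWeights (rotateWeights w) := by
  obtain ⟨h3, h23⟩ := hw
  rw [Fin.sum_univ_four] at hsum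
  have hη : 1 - w 2 / (w 3 + w 2) = w 3 / (w 3 + w 2) := by
    field_simp
    ring
  simp only [refD4, paramsOfWeights, rotateWeights, hη, Fin.reduceAdd]
  refine Prod.ext ?_ (Prod.ext rfl rfl)
  simp only
  rw [div_div_cancel₀ h3]
  linarith

lemma weightsAdmissible_rotateWeights {w : Fin 4 → ℝ}
    (hsum : (paramsOfWeights w).1 + (paramsOfWeights w).2.1 ≠ 0)
    (hη : (paramsOfWeights (rotateWeights w)).2.2 ≠ 1) :
    WeightsAdmissible (rotateWeights w) := by
  simp only [WeightsAdmissible, paramsOfWeights, rotateWeights, Fin.reduceAdd] at hsum hη ⊢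
  rw [Ne, div_eq_one_iff_eq hsum] at hη
  exact ⟨fun h0 => hη (by rw [h0, zero_add]), hsum⟩

def OrbitNondegenerate (n : ℕ) (p : ℝ × ℝ × ℝ) : Prop :=
  ∀ k < n, (refD4^[k] p).2.2 ≠ 1 ∧ (refD4^[k] p).1 + (refD4^[k] p).2.1 ≠ 0

lemma refD4_iterate_paramsOfWeights {w : Fin 4 → ℝ} (hsum : ∑ i, w i = 1)
    (hw : WeightsAdmissible w) {n : ℕ} (hdeg : OrbitNondegenerate (n + 1) (paramsOfWeights w)) :
    WeightsAdmissible (rotateWeights^[n] w) ∧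
      refD4^[n] (paramsOfWeights w) = paramsOfWeights (rotateWeights^[n] w) := by
  induction n with
  | zero => exact ⟨hw, rfl⟩
  | succ n ih =>
    obtain ⟨hwn, hn⟩ := ih fun k hk => hdeg k (by omega)
    have hsumn : ∑ i, (rotateWeights^[n] w) i = 1 := (sum_iterate_rotateWeights n w).trans hsum
    have hstep : refD4^[n + 1] (paramsOfWeights w) =
        paramsOfWeights (rotateWeights^[n + 1] w) := by
      rw [Function.iterate_succ_apply', hn, refD4_paramsOfWeights hsumn hwn,
        Function.iterate_succ_apply']
    have hs := (hdeg n (by omega)).2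
    have hη := (hdeg (n + 1) (by omega)).1
    rw [hn] at hs
    rw [hstep, Function.iterate_succ_apply'] at hη
    refine ⟨?_, hstep⟩
    rw [Function.iterate_succ_apply']
    exact weightsAdmissible_rotateWeights hs hη

lemma refD4_iterate_two_of_snd_eq_zero (ε η : ℝ) : refD4^[2] (ε, 0, η) = (0, 1 - ε, ε) := by
  simp only [Function.iterate_succ, Function.iterate_zero, Function.comp_apply, id_eq, refD4]
  norm_num

lemma OrbitNondegenerate.snd_ne_zero {p : ℝ × ℝ × ℝ} (H : OrbitNondegenerate 4 p) : p.2.1 ≠ 0 := by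
  obtain ⟨ε, δ, η⟩ := p
  rintro (rfl : δ = 0)
  have h2 := (H 2 (by norm_num)).2
  have h3 := (H 3 (by norm_num)).1
  rw [refD4_iterate_two_of_snd_eq_zero] at h2
  rw [Function.iterate_succ_apply', refD4_iterate_two_of_snd_eq_zero] at h3
  simp only [refD4, zero_add] at h2 h3
  exact h3 (div_self h2)

lemma refD4_iterate_four_of_orbitNondegenerate {p : ℝ × ℝ × ℝ} (H : OrbitNondegenerate 4 p) :
    refD4^[4] p = p := by
  have hη : p.2.2 ≠ 1 := (H 0 (by norm_num)).1
  have hp := paramsOfWeights_weightsOfParams hη H.snd_ne_zero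
  rw [← hp] at H ⊢
  have hsum := sum_weightsOfParams hη
  obtain ⟨hw₃, h₃⟩ := refD4_iterate_paramsOfWeights hsum
    (weightsAdmissible_weightsOfParams hη H.snd_ne_zero) (n := 3) H
  rw [Function.iterate_succ_apply', h₃,
    refD4_paramsOfWeights ((sum_iterate_rotateWeights 3 _).trans hsum) hw₃,
    ← Function.iterate_succ_apply' rotateWeights, iterate_rotateWeights_four]

lemma refD4_eq_self_iff {ε δ η : ℝ} (hs : ε + δ ≠ 0) :
    refD4 (ε, δ, η) = (ε, δ, η) ↔ (ε, δ, η) = ((1:ℝ)/4, (1:ℝ)/4, (1:ℝ)/2) := by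
  constructor
  · intro h
    simp only [refD4, Prod.mk.injEq] at h
    obtain ⟨h1, rfl, h3⟩ := h
    have hε : ε ≠ 0 := fun h0 => hs (by rw [h0, add_zero])
    have hη : η = 1 / 2 := by
      rw [← h3]
      field_simp
      ring
    subst hη
    have : ε = 1 / 4 := by norm_num at h1; linarith
    subst this
    norm_num
  · rintro ⟨⟩
    norm_num [refD4]

theorem refD4_order_four_and_unique_fixed_point :
    (∀ ε δ η : ℝ,
      (∀ k < 4, (refD4^[k] (ε, δ, η)).2.2 ≠ 1 ∧
        (refD4^[k] (ε, δ, η)).1 + (refD4^[k] (ε, δ, η)).2.1 ≠ 0) →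
      refD4^[4] (ε, δ, η) = (ε, δ, η)) ∧
    (∀ ε δ η : ℝ, η ≠ 1 → ε + δ ≠ 0 →
      (refD4 (ε, δ, η) = (ε, δ, η) ↔ (ε, δ, η) = ((1:ℝ)/4, (1:ℝ)/4, (1:ℝ)/2))) :=
  ⟨fun _ _ _ H => refD4_iterate_four_of_orbitNondegenerate H,
    fun _ _ _ _ hs => refD4_eq_self_iff hs⟩
end

section
/- With A₄(ε,δ,η) = (1 - ε(1-η)/(1-δ-η), ε, δ) and H₄(ε,δ,η) = (1 - η(1-ε)/(1-ε-δ), η, δ), the composite A₄ followed by H₄ equals the swap (ε,δ,η) ↦ (η,δ,ε) wherever defined, and hence is an involution. -/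
noncomputable def refH4 : ℝ × ℝ × ℝ → ℝ × ℝ × ℝ :=
  fun p => (1 - p.2.2 * (1 - p.1) / (1 - p.1 - p.2.1), p.2.2, p.2.1)

lemma key (ε δ η : ℝ)
    (h₁ : 1 - δ - η ≠ 0)
    (h₂ : 1 - (refA4 (ε, δ, η)).1 - (refA4 (ε, δ, η)).2.1 ≠ 0) :
    refH4 (refA4 (ε, δ, η)) = (η, δ, ε) := by
  simp only [refA4, refH4] at *
  have hd : 1 - (1 - ε * (1 - η) / (1 - δ - η)) - ε = ε * δ / (1 - δ - η) := by
    field_simp; ring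
  rw [hd] at h₂ ⊢
  have hεδ : ε * δ ≠ 0 := fun h => h₂ (by rw [h]; simp)
  have hε : ε ≠ 0 := fun h => hεδ (by rw [h]; ring)
  have hδ : δ ≠ 0 := fun h => hεδ (by rw [h]; ring)
  have : 1 - (1 - ε * (1 - η) / (1 - δ - η)) = ε * (1 - η) / (1 - δ - η) := by ring
  rw [this]
  have : δ * (ε * (1 - η) / (1 - δ - η)) / (ε * δ / (1 - δ - η)) = 1 - η := by
    field_simp
  rw [this]
  norm_num

theorem refAH_is_swap (ε δ η : ℝ)
    (h₁ : 1 - δ - η ≠ 0)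
    (h₂ : 1 - (refA4 (ε, δ, η)).1 - (refA4 (ε, δ, η)).2.1 ≠ 0)
    (h₃ : 1 - δ - ε ≠ 0)
    (h₄ : 1 - (refA4 (η, δ, ε)).1 - (refA4 (η, δ, ε)).2.1 ≠ 0) :
    refH4 (refA4 (ε, δ, η)) = (η, δ, ε) ∧
    refH4 (refA4 (refH4 (refA4 (ε, δ, η)))) = (ε, δ, η) := by
  have k1 := key ε δ η h₁ h₂
  have k2 := key η δ ε h₃ h₄
  exact ⟨k1, by rw [k1, k2]⟩
end
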